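/- arXiv:1807.01442 — 2 statements merged into one kernel-verified Lean document; each statement's English description precedes it below -/
import Mathlib

section
/- Let η' ∈ ℝ^n and let T₁, T₂ be disjoint index sets with |T₁| = bl, such that every coordinate of η' indexed by T₂ has absolute value at most every coordinate indexed by T₁ (i.e., |η'_j| ≤ |η'_i| for all j ∈ T₂, i ∈ T₁). Then ‖η'_{T₂}‖₂ ≤ (bl)^{-1/2} ‖η'_{T₁}‖₁, where η'_{T} denotes the restriction of η' to indices in T (zeroing out the rest) and |T₂| ≤ bl. -/
noncomputable section

/-- The ℓ₂ norm of a vector in ℝⁿ. -/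
def l2 {n : ℕ} (x : Fin n → ℝ) : ℝ := Real.sqrt (∑ i, (x i) ^ 2)

/-- The ℓ₁ norm of a vector in ℝⁿ. -/
def l1 {n : ℕ} (x : Fin n → ℝ) : ℝ := ∑ i, |x i|

/-- Restriction of a vector to an index set (zero elsewhere). -/
def restr {n : ℕ} (x : Fin n → ℝ) (T : Finset (Fin n)) : Fin n → ℝ :=
  fun i => if i ∈ T then x i else 0

/-!
Each coordinate on `T₂` is at most the average `S / bl` of `|η'|` over `T₁`, where
`S = ‖η'_{T₁}‖₁`; summing the squares over the at most `bl` indices of `T₂` gives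
`‖η'_{T₂}‖₂² ≤ bl (S / bl)² = S² / bl`.
-/

open Finset

lemma sum_comp_restr {n : ℕ} (x : Fin n → ℝ) (T : Finset (Fin n)) {f : ℝ → ℝ} (hf : f 0 = 0) :
    ∑ i, f (restr x T i) = ∑ i ∈ T, f (x i) := by
  simp only [restr, apply_ite f, hf, Fintype.sum_ite_mem]

lemma l1_restr {n : ℕ} (x : Fin n → ℝ) (T : Finset (Fin n)) :
    l1 (restr x T) = ∑ i ∈ T, |x i| :=
  sum_comp_restr x T abs_zero

lemma l2_restr {n : ℕ} (x : Fin n → ℝ) (T : Finset (Fin n)) :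
    l2 (restr x T) = √(∑ i ∈ T, x i ^ 2) := by
  rw [l2, sum_comp_restr x T (f := (· ^ 2)) (zero_pow two_ne_zero)]

lemma card_mul_sum_sq_le_sq_sum_abs_of_forall_abs_le {ι : Type*} {s t : Finset ι} {x : ι → ℝ}
    (hts : #t ≤ #s) (hdom : ∀ j ∈ t, ∀ i ∈ s, |x j| ≤ |x i|) :
    #s * ∑ j ∈ t, x j ^ 2 ≤ (∑ i ∈ s, |x i|) ^ 2 := by
  set S := ∑ i ∈ s, |x i|
  have hcoord : ∀ j ∈ t, #s * |x j| ≤ S := fun j hj => by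
    simpa using s.card_nsmul_le_sum _ _ (hdom j hj)
  have hsq : (#s : ℝ) * (#s * ∑ j ∈ t, x j ^ 2) ≤ #s * S ^ 2 :=
    calc (#s : ℝ) * (#s * ∑ j ∈ t, x j ^ 2) = ∑ j ∈ t, (#s * |x j|) ^ 2 := by
          rw [← mul_assoc, ← sq, mul_sum]
          simp only [mul_pow, sq_abs]
      _ ≤ #t • S ^ 2 := sum_le_card_nsmul _ _ _ fun j hj =>
          pow_le_pow_left₀ (by positivity) (hcoord j hj) 2
      _ ≤ #s * S ^ 2 := by rw [nsmul_eq_mul]; gcongr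
  rcases (#s).eq_zero_or_pos with hs | hs
  · simp [hs, sq_nonneg]
  · exact le_of_mul_le_mul_left hsq (by exact_mod_cast hs)

lemma sqrt_sum_sq_le_inv_sqrt_card_mul_sum_abs_of_forall_abs_le {ι : Type*}
    {s t : Finset ι} {x : ι → ℝ} (hs : 0 < #s) (hts : #t ≤ #s)
    (hdom : ∀ j ∈ t, ∀ i ∈ s, |x j| ≤ |x i|) :
    √(∑ j ∈ t, x j ^ 2) ≤ (√(#s : ℝ))⁻¹ * ∑ i ∈ s, |x i| := by
  have hS : 0 ≤ ∑ i ∈ s, |x i| := sum_nonneg fun i _ => abs_nonneg _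
  rw [inv_mul_eq_div, le_div_iff₀ (by positivity), ← Real.sqrt_mul (by positivity),
    ← Real.sqrt_sq hS, mul_comm]
  exact Real.sqrt_le_sqrt (card_mul_sum_sq_le_sq_sum_abs_of_forall_abs_le hts hdom)

theorem stmt6_general {n : ℕ} (bl : ℕ) (hbl : 0 < bl) (η' : Fin n → ℝ)
    (T₁ T₂ : Finset (Fin n)) (hT₁ : T₁.card = bl)
    (hT₂ : T₂.card ≤ bl)
    (hdom : ∀ j ∈ T₂, ∀ i ∈ T₁, |η' j| ≤ |η' i|) :
    l2 (restr η' T₂) ≤ (Real.sqrt bl)⁻¹ * l1 (restr η' T₁) := by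
  subst hT₁
  rw [l2_restr, l1_restr]
  exact sqrt_sum_sq_le_inv_sqrt_card_mul_sum_abs_of_forall_abs_le hbl hT₂ hdom

/-- Block-wise ℓ₂/ℓ₁ bound: if every coordinate of η' in T₂ is dominated in
    magnitude by every coordinate in T₁, |T₁| = bl and |T₂| ≤ bl, then
    ‖η'_{T₂}‖₂ ≤ (bl)^{-1/2} ‖η'_{T₁}‖₁. -/
theorem stmt6 {n : ℕ} (bl : ℕ) (hbl : 0 < bl) (η' : Fin n → ℝ)
    (T₁ T₂ : Finset (Fin n)) (hdisj : Disjoint T₁ T₂) (hT₁ : T₁.card = bl)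
    (hT₂ : T₂.card ≤ bl)
    (hdom : ∀ j ∈ T₂, ∀ i ∈ T₁, |η' j| ≤ |η' i|) :
    l2 (restr η' T₂) ≤ (Real.sqrt bl)⁻¹ * l1 (restr η' T₁) :=
  stmt6_general bl hbl η' T₁ T₂ hT₁ hT₂ hdom
end
end

section
/- Suppose for all η in the tube T_A(2ε_max) = {w : ‖Aw‖₂ ≤ 2ε_max} the null-space property ‖η‖₂ ≤ (C₀/2) l^{-t} σ_{2l,G'}(η) + C₁ε_max + δ holds. Then the decoder Δ(y) = argmin_{x : ‖Ax - y‖₂ ≤ ε_max} σ_{l,G}(x) satisfies ‖x - Δ(Ax + ε)‖₂ ≤ C₀ l^{-t} σ_{l,G}(x) + C₁ε_max + δ for all x ∈ ℝ^n and all noise ε with ‖ε‖₂ ≤ ε_max. -/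
noncomputable section

/-- The ℓ₀ "norm": number of nonzero coordinates. -/
def l0 {n : ℕ} (x : Fin n → ℝ) : ℕ := (Finset.univ.filter fun i => x i ≠ 0).card

lemma l1_nonneg {n : ℕ} (x : Fin n → ℝ) : 0 ≤ l1 x :=
  Finset.sum_nonneg fun i _ => abs_nonneg _

lemma l1_add_le {n : ℕ} (u v : Fin n → ℝ) : l1 (u + v) ≤ l1 u + l1 v := by
  rw [l1, l1, l1, ← Finset.sum_add_distrib]
  exact Finset.sum_le_sum fun i _ => abs_add_le _ _

lemma l2_eq_norm {n : ℕ} (x : Fin n → ℝ) :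
    l2 x = ‖(WithLp.equiv 2 (Fin n → ℝ)).symm x‖ := by
  rw [EuclideanSpace.norm_eq, l2]
  congr 1
  exact Finset.sum_congr rfl fun i _ => by rw [Real.norm_eq_abs, sq_abs]; rfl

lemma l2_add_le {n : ℕ} (u v : Fin n → ℝ) : l2 (u + v) ≤ l2 u + l2 v := by
  rw [l2_eq_norm, l2_eq_norm, l2_eq_norm]
  rw [show (WithLp.equiv 2 (Fin n → ℝ)).symm (u + v)
      = (WithLp.equiv 2 (Fin n → ℝ)).symm u + (WithLp.equiv 2 (Fin n → ℝ)).symm v from rfl]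
  exact norm_add_le _ _

lemma l2_neg {n : ℕ} (u : Fin n → ℝ) : l2 (-u) = l2 u := by
  simp [l2]

lemma l0_add_le {n : ℕ} (u v : Fin n → ℝ) : l0 (u + v) ≤ l0 u + l0 v := by
  classical
  rw [l0, l0, l0]
  refine le_trans (Finset.card_le_card ?_) (Finset.card_union_le _ _)
  intro i hi
  simp only [Finset.mem_filter, Finset.mem_union, Finset.mem_univ, true_and] at *
  by_contra h
  push_neg at h
  exact hi (by simp [Pi.add_apply, h.1, h.2])

lemma l0_neg {n : ℕ} (u : Fin n → ℝ) : l0 (-u) = l0 u := by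
  simp [l0]

/-- S_{l,G}. -/
def SlG {n k : ℕ} (G : (Fin k → ℝ) → (Fin n → ℝ)) (l : ℕ) : Set (Fin n → ℝ) :=
  {w | ∃ z : Fin k → ℝ, l0 (w - G z) ≤ l}

/-- S_{2l,G'} where G'(z₁,z₂) = G z₁ - G z₂. -/
def SlG' {n k : ℕ} (G : (Fin k → ℝ) → (Fin n → ℝ)) (l : ℕ) : Set (Fin n → ℝ) :=
  {w | ∃ z₁ z₂ : Fin k → ℝ, l0 (w - (G z₁ - G z₂)) ≤ 2 * l}

/-- σ_T(x) = inf_{xh ∈ T} ‖x - xh‖₁. -/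
def sigma' {n : ℕ} (T : Set (Fin n → ℝ)) (x : Fin n → ℝ) : ℝ :=
  sInf {d : ℝ | ∃ xh ∈ T, d = l1 (x - xh)}

lemma sigma_set_nonneg {n : ℕ} (T : Set (Fin n → ℝ)) (x : Fin n → ℝ) :
    ∀ d ∈ {d : ℝ | ∃ xh ∈ T, d = l1 (x - xh)}, 0 ≤ d := by
  rintro d ⟨xh, _, rfl⟩; exact l1_nonneg _

lemma sigma_bddBelow {n : ℕ} (T : Set (Fin n → ℝ)) (x : Fin n → ℝ) :
    BddBelow {d : ℝ | ∃ xh ∈ T, d = l1 (x - xh)} :=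
  ⟨0, fun d hd => sigma_set_nonneg T x d hd⟩

lemma sigma_nonneg {n : ℕ} (T : Set (Fin n → ℝ)) (x : Fin n → ℝ) : 0 ≤ sigma' T x := by
  rcases Set.eq_empty_or_nonempty {d : ℝ | ∃ xh ∈ T, d = l1 (x - xh)} with h | h
  · rw [sigma', h, Real.sInf_empty]
  · exact le_csInf h (sigma_set_nonneg T x)

lemma sigma_le {n : ℕ} (T : Set (Fin n → ℝ)) (x xh : Fin n → ℝ) (h : xh ∈ T) :
    sigma' T x ≤ l1 (x - xh) :=
  csInf_le (sigma_bddBelow T x) ⟨xh, h, rfl⟩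

lemma SlG_nonempty_set {n k : ℕ} (G : (Fin k → ℝ) → (Fin n → ℝ)) (l : ℕ) (x : Fin n → ℝ) :
    {d : ℝ | ∃ xh ∈ SlG G l, d = l1 (x - xh)}.Nonempty := by
  refine ⟨l1 (x - G 0), G 0, ⟨0, ?_⟩, rfl⟩
  simp [l0]

lemma sigma_sub_le {n k : ℕ} (G : (Fin k → ℝ) → (Fin n → ℝ)) (l : ℕ) (x d : Fin n → ℝ) :
    sigma' (SlG' G l) (x - d) ≤ sigma' (SlG G l) x + sigma' (SlG G l) d := by
  refine le_of_forall_pos_le_add fun ε hε => ?_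
  obtain ⟨d₁, hd₁, hd₁lt⟩ := Real.lt_sInf_add_pos (SlG_nonempty_set G l x) (half_pos hε)
  obtain ⟨d₂, hd₂, hd₂lt⟩ := Real.lt_sInf_add_pos (SlG_nonempty_set G l d) (half_pos hε)
  obtain ⟨xh, ⟨z₁, hz₁⟩, rfl⟩ := hd₁
  obtain ⟨dh, ⟨z₂, hz₂⟩, rfl⟩ := hd₂
  have hmem : (xh - dh) ∈ SlG' G l := by
    refine ⟨z₁, z₂, ?_⟩
    have : xh - dh - (G z₁ - G z₂) = (xh - G z₁) + (-(dh - G z₂)) := by ring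
    rw [this]
    calc l0 ((xh - G z₁) + (-(dh - G z₂))) ≤ l0 (xh - G z₁) + l0 (-(dh - G z₂)) :=
          l0_add_le _ _
      _ = l0 (xh - G z₁) + l0 (dh - G z₂) := by rw [l0_neg]
      _ ≤ l + l := Nat.add_le_add hz₁ hz₂
      _ = 2 * l := by ring
  have h1 : sigma' (SlG' G l) (x - d) ≤ l1 ((x - d) - (xh - dh)) := sigma_le _ _ _ hmem
  have h2 : l1 ((x - d) - (xh - dh)) ≤ l1 (x - xh) + l1 (d - dh) := by
    have : (x - d) - (xh - dh) = (x - xh) + (-(d - dh)) := by ring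
    rw [this]
    calc l1 ((x - xh) + (-(d - dh))) ≤ l1 (x - xh) + l1 (-(d - dh)) := l1_add_le _ _
      _ = l1 (x - xh) + l1 (d - dh) := by
          congr 1; simp only [l1]; exact Finset.sum_congr rfl fun i _ => by rw [Pi.neg_apply, abs_neg]
  calc sigma' (SlG' G l) (x - d) ≤ l1 (x - xh) + l1 (d - dh) := h1.trans h2
    _ ≤ (sInf {d' : ℝ | ∃ xh ∈ SlG G l, d' = l1 (x - xh)} + ε / 2)
        + (sInf {d' : ℝ | ∃ xh ∈ SlG G l, d' = l1 (d - xh)} + ε / 2) :=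
          add_le_add hd₁lt.le hd₂lt.le
    _ = sigma' (SlG G l) x + sigma' (SlG G l) d + ε := by rw [sigma', sigma']; ring

/-- Sufficiency of the (ℓ₂,ℓ₁)-mixed norm null space property: if every η in the
    tube T_A(2ε_max) satisfies ‖η‖₂ ≤ (C₀/2) l^{-t} σ_{2l,G'}(η) + C₁ε_max + δ,
    then the decoder minimizing σ_{l,G} over the feasible set satisfies the
    mixed-norm recovery guarantee. -/
theorem stmt8 {m n k : ℕ} (A : Matrix (Fin m) (Fin n) ℝ)
    (G : (Fin k → ℝ) → (Fin n → ℝ)) (l : ℕ) (C₀ C₁ δ t εmax : ℝ)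
    (hC₀ : 0 ≤ C₀) (hC₁ : 0 ≤ C₁) (hδ : 0 ≤ δ) (ht : 0 ≤ t) (hε : 0 ≤ εmax)
    (hNSP : ∀ η : Fin n → ℝ, l2 (A.mulVec η) ≤ 2 * εmax →
      l2 η ≤ (C₀ / 2) * (l : ℝ) ^ (-t) * sigma' (SlG' G l) η + C₁ * εmax + δ)
    (Δ : (Fin m → ℝ) → (Fin n → ℝ))
    -- Δ is the argmin of σ_{l,G} over the feasible set {x : ‖Ax - y‖₂ ≤ ε_max},
    -- for every measurement of the form y = Ax + ε with ‖ε‖₂ ≤ ε_max: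
    (hΔfeas : ∀ (x : Fin n → ℝ) (ε : Fin m → ℝ), l2 ε ≤ εmax →
      l2 (A.mulVec (Δ (A.mulVec x + ε)) - (A.mulVec x + ε)) ≤ εmax)
    (hΔmin : ∀ (x : Fin n → ℝ) (ε : Fin m → ℝ), l2 ε ≤ εmax →
      ∀ x' : Fin n → ℝ, l2 (A.mulVec x' - (A.mulVec x + ε)) ≤ εmax →
        sigma' (SlG G l) (Δ (A.mulVec x + ε)) ≤ sigma' (SlG G l) x') :
    ∀ (x : Fin n → ℝ) (ε : Fin m → ℝ), l2 ε ≤ εmax →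
      l2 (x - Δ (A.mulVec x + ε)) ≤
        C₀ * (l : ℝ) ^ (-t) * sigma' (SlG G l) x + C₁ * εmax + δ := by
  intro x ε hεle
  set d := Δ (A.mulVec x + ε) with hd
  have hfe := hΔfeas x ε hεle
  have hxfeas : l2 (A.mulVec x - (A.mulVec x + ε)) ≤ εmax := by
    have h : A.mulVec x - (A.mulVec x + ε) = -ε := by ring
    rw [h, l2_neg]; exact hεle
  have hmin := hΔmin x ε hεle x hxfeas
  have hA : l2 (A.mulVec (x - d)) ≤ 2 * εmax := by
    have heq : A.mulVec (x - d) = (-(A.mulVec d - (A.mulVec x + ε))) + (-ε) := by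
      rw [Matrix.mulVec_sub]; ring
    rw [heq]
    calc l2 ((-(A.mulVec d - (A.mulVec x + ε))) + (-ε))
        ≤ l2 (-(A.mulVec d - (A.mulVec x + ε))) + l2 (-ε) := l2_add_le _ _
      _ = l2 (A.mulVec d - (A.mulVec x + ε)) + l2 ε := by rw [l2_neg, l2_neg]
      _ ≤ εmax + εmax := add_le_add hfe hεle
      _ = 2 * εmax := by ring
  have hc : (0:ℝ) ≤ (l:ℝ) ^ (-t) := Real.rpow_nonneg (Nat.cast_nonneg l) _
  have hcc : (0:ℝ) ≤ C₀ / 2 * (l:ℝ) ^ (-t) := mul_nonneg (by linarith) hc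
  calc l2 (x - d)
      ≤ (C₀ / 2) * (l:ℝ) ^ (-t) * sigma' (SlG' G l) (x - d) + C₁ * εmax + δ :=
        hNSP (x - d) hA
    _ ≤ (C₀ / 2) * (l:ℝ) ^ (-t) * (sigma' (SlG G l) x + sigma' (SlG G l) d)
        + C₁ * εmax + δ := by
        have := sigma_sub_le G l x d
        nlinarith [mul_le_mul_of_nonneg_left this hcc]
    _ ≤ (C₀ / 2) * (l:ℝ) ^ (-t) * (sigma' (SlG G l) x + sigma' (SlG G l) x)
        + C₁ * εmax + δ := by
        nlinarith [mul_le_mul_of_nonneg_left hmin hcc]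
    _ = C₀ * (l:ℝ) ^ (-t) * sigma' (SlG G l) x + C₁ * εmax + δ := by ring
end
end
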